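/- arXiv:math/0311034 — 2 statements merged into one kernel-verified Lean document; each statement's English description precedes it below -/
import Mathlib

section
/- Let φ : [0,∞) → (0, 1/(2e)] be a differentiable function satisfying φ'(t) ≤ C·φ(t)·log(1/φ(t))·log(log(1/φ(t))) for all t ≥ 0, where C > 0. Then φ(t) ≤ exp(-(log(1/φ(0)))^{exp(-C t)}) for all t ≥ 0. -/
/-!
With `L = log (1 / φ)`, the hypothesis says exactly that `ψ = log L` satisfies `ψ' ≥ -C ψ`:
indeed `ψ' = -φ' / (φ L)` and `φ L > 0`. Hence `e^{C t} ψ(t)` is nondecreasing, so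
`log L(t) ≥ e^{-C t} log L(0)`, i.e. `L(t) ≥ L(0) ^ e^{-C t}`, and exponentiating `φ = e^{-L}` gives
the bound.
-/

open Real Set

theorem exp_neg_mul_sub_mul_le_of_hasDerivAt {ψ ψ' : ℝ → ℝ} {C a : ℝ}
    (hψ : ∀ t ∈ Ici a, HasDerivAt ψ (ψ' t) t) (hψ' : ∀ t ∈ Ici a, -C * ψ t ≤ ψ' t)
    {t : ℝ} (ht : a ≤ t) :
    exp (-C * (t - a)) * ψ a ≤ ψ t := by
  have hg : ∀ s ∈ Ici a, HasDerivAt (fun s => exp (C * s) * ψ s)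
      (exp (C * s) * (C * ψ s + ψ' s)) s := fun s hs => by
    have hexp : HasDerivAt (fun s => exp (C * s)) (exp (C * s) * C) s := by
      simpa using ((hasDerivAt_id s).const_mul C).exp
    exact (hexp.mul (hψ s hs)).congr_deriv (by ring)
  have hmono : MonotoneOn (fun s => exp (C * s) * ψ s) (Ici a) := by
    refine monotoneOn_of_hasDerivWithinAt_nonneg (convex_Ici a)
      (f' := fun s => exp (C * s) * (C * ψ s + ψ' s))
      (fun s hs => (hg s hs).continuousAt.continuousWithinAt) (fun s hs => ?_) fun s hs => ?_
    · rw [interior_Ici] at hs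
      exact (hg s (mem_Ici_of_Ioi hs)).hasDerivWithinAt
    · rw [interior_Ici] at hs
      have := hψ' s (mem_Ici_of_Ioi hs)
      exact mul_nonneg (exp_pos _).le (by linarith)
  have h := hmono self_mem_Ici ht ht
  calc exp (-C * (t - a)) * ψ a = exp (-C * t) * (exp (C * a) * ψ a) := by
        rw [← mul_assoc, ← exp_add]; ring_nf
    _ ≤ exp (-C * t) * (exp (C * t) * ψ t) := mul_le_mul_of_nonneg_left h (exp_pos _).le
    _ = ψ t := by rw [← mul_assoc, ← exp_add]; simp

theorem hasDerivAt_log_neg_log {f : ℝ → ℝ} {f' x : ℝ} (hf : HasDerivAt f f' x)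
    (hx : f x ∈ Ioo 0 1) :
    HasDerivAt (fun y => log (-log (f y))) (f' / (f x * log (f x))) x := by
  have hlog : log (f x) < 0 := log_neg hx.1 hx.2
  refine ((hf.log hx.1.ne').neg.log (neg_ne_zero.mpr hlog.ne)).congr_deriv ?_
  change -(f' / f x) / -log (f x) = _
  field_simp

theorem exp_neg_mul_mul_log_log_le {φ : ℝ → ℝ} {C : ℝ}
    (hrange : ∀ t, 0 ≤ t → φ t ∈ Ioo 0 1)
    (hdiff : ∀ t, 0 ≤ t → DifferentiableAt ℝ φ t)
    (hineq : ∀ t, 0 ≤ t → deriv φ t ≤ C * φ t * log (1 / φ t) * log (log (1 / φ t)))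
    {t : ℝ} (ht : 0 ≤ t) :
    exp (-C * t) * log (log (1 / φ 0)) ≤ log (log (1 / φ t)) := by
  have hψ' : ∀ s ∈ Ici (0 : ℝ), -C * log (-log (φ s)) ≤ deriv φ s / (φ s * log (φ s)) := by
    intro s hs
    have ⟨hφ0, hφ1⟩ := hrange s hs
    have hφlog : φ s * log (φ s) < 0 := mul_neg_of_pos_of_neg hφ0 (log_neg hφ0 hφ1)
    rw [le_div_iff_of_neg hφlog]
    have := hineq s hs
    simp only [one_div, log_inv] at this
    linarith
  have h := exp_neg_mul_sub_mul_le_of_hasDerivAt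
    (fun s hs => hasDerivAt_log_neg_log (hdiff s hs).hasDerivAt (hrange s hs)) hψ' ht
  simpa only [one_div, log_inv, sub_zero] using h

theorem stmt3_general (φ : ℝ → ℝ) (C : ℝ)
    (hrange : ∀ t, 0 ≤ t → φ t ∈ Set.Ioc (0:ℝ) (1 / (2 * Real.exp 1)))
    (hdiff : ∀ t, 0 ≤ t → DifferentiableAt ℝ φ t)
    (hineq : ∀ t, 0 ≤ t → deriv φ t ≤
      C * φ t * Real.log (1 / φ t) * Real.log (Real.log (1 / φ t))) :
    ∀ t, 0 ≤ t → φ t ≤ Real.exp (-(Real.log (1 / φ 0)) ^ Real.exp (-C * t)) := by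
  have hrange' : ∀ t, 0 ≤ t → φ t ∈ Ioo 0 1 := fun t ht =>
    ⟨(hrange t ht).1, (hrange t ht).2.trans_lt <| by
      rw [div_lt_one (by positivity)]; linarith [add_one_le_exp 1]⟩
  have hL : ∀ t, 0 ≤ t → 0 < log (1 / φ t) := fun t ht =>
    log_pos (one_lt_one_div (hrange' t ht).1 (hrange' t ht).2)
  intro t ht
  have hpow : log (1 / φ 0) ^ exp (-C * t) ≤ log (1 / φ t) :=
    (rpow_le_iff_le_log (hL 0 le_rfl) (hL t ht)).mpr
      (exp_neg_mul_mul_log_log_le hrange' hdiff hineq ht)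
  calc φ t = exp (-log (1 / φ t)) := by rw [one_div, log_inv, neg_neg, exp_log (hrange' t ht).1]
    _ ≤ exp (-log (1 / φ 0) ^ exp (-C * t)) := exp_le_exp.mpr (neg_le_neg hpow)

theorem stmt3 (φ : ℝ → ℝ) (C : ℝ) (hC : 0 < C)
    (hrange : ∀ t, 0 ≤ t → φ t ∈ Set.Ioc (0:ℝ) (1 / (2 * Real.exp 1)))
    (hdiff : ∀ t, 0 ≤ t → DifferentiableAt ℝ φ t)
    (hineq : ∀ t, 0 ≤ t → deriv φ t ≤
      C * φ t * Real.log (1 / φ t) * Real.log (Real.log (1 / φ t))) :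
    ∀ t, 0 ≤ t → φ t ≤ Real.exp (-(Real.log (1 / φ 0)) ^ Real.exp (-C * t)) :=
  stmt3_general φ C hrange hdiff hineq
end

section
/- Let ρ : [1,∞) → ℝ₊ be a C¹ function with lim_{s→∞} s·ρ'(s)/ρ(s) = 0 and lim_{s→∞} ρ(s) = +∞. Define ψ(ξ) = ∫₀^ξ ds/(s·f(s)+1) and Φ(ξ) = exp(-ψ(ξ)), where f is a strictly positive C¹ extension of ρ to [0,∞) with f = ρ on [1,∞). Then Φ'(ξ) = -Φ(ξ)/(ξ·f(ξ)+1) ≤ 0, and there exists a constant C > 0 such that Φ''(ξ) ≤ C·Φ(ξ)·f(ξ)/(ξ·f(ξ)+1)² for all ξ ≥ 0. -/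
/-!
Since `Φ = exp (-ψ)` and `ψ' = 1 / D` with `D ξ = ξ f ξ + 1`, we get `Φ' = -Φ / D` and
`Φ'' = Φ (1 + D') / D² = Φ (1 + f + ξ f') / D²`. So the claim reduces to `1 + f + ξ f' ≤ C f`
on `[0, ∞)`. Far out, `f = ρ ≥ 1` and `ξ ρ' ≤ ρ` because `ξ ρ' / ρ → 0`, so `C = 3` works there;
on the remaining compact interval the continuous ratio `(1 + f + ξ f') / f` is bounded.
-/

open Real Set Filter MeasureTheory intervalIntegral Topology

theorem ContinuousAt.exists_lt_forall_pos_of_forall_Ici {g : ℝ → ℝ} {b : ℝ}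
    (hg : ContinuousAt g b) (hpos : ∀ s ∈ Ici b, 0 < g s) :
    ∃ a < b, ∀ s ∈ Ioi a, 0 < g s := by
  obtain ⟨a, c, ⟨hab, hbc⟩, hsub⟩ :=
    mem_nhds_iff_exists_Ioo_subset.mp (continuousAt_const.eventually_lt hg (hpos b self_mem_Ici))
  refine ⟨a, hab, fun s hs => ?_⟩
  rcases le_or_gt b s with hbs | hsb
  · exact hpos s hbs
  · exact hsub ⟨hs, hsb.trans hbc⟩

theorem hasDerivAt_integral_of_continuousOn_Ioi {E : Type*} [NormedAddCommGroup E]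
    [NormedSpace ℝ E] [CompleteSpace E] {g : ℝ → E} {a b ξ : ℝ}
    (hg : ContinuousOn g (Ioi a)) (hb : a < b) (hξ : a < ξ) :
    HasDerivAt (fun t => ∫ s in b..t, g s) (g ξ) ξ := by
  have hsub : uIcc b ξ ⊆ Ioi a := fun s hs => lt_of_lt_of_le (lt_min hb hξ) hs.1
  exact integral_hasDerivAt_right ((hg.mono hsub).intervalIntegrable)
    (hg.stronglyMeasurableAtFilter isOpen_Ioi ξ hξ) (hg.continuousAt (Ioi_mem_nhds hξ))

theorem hasDerivAt_exp_neg_integral_one_div {D : ℝ → ℝ} {a ξ : ℝ}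
    (hD : ContinuousOn D (Ioi a)) (hD0 : ∀ s ∈ Ioi a, D s ≠ 0) (ha : a < 0) (hξ : a < ξ) :
    HasDerivAt (fun t => exp (-∫ s in 0..t, 1 / D s))
      (-exp (-∫ s in 0..ξ, 1 / D s) / D ξ) ξ := by
  have hψ := hasDerivAt_integral_of_continuousOn_Ioi (g := fun s => 1 / D s)
    (continuousOn_const.div hD hD0) ha hξ
  convert hψ.fun_neg.exp using 1
  ring

theorem deriv_deriv_eq_of_hasDerivAt_neg_div {Φ D : ℝ → ℝ} {U : Set ℝ} {ξ D' : ℝ}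
    (hU : IsOpen U) (hΦ : ∀ x ∈ U, HasDerivAt Φ (-Φ x / D x) x) (hξ : ξ ∈ U)
    (hD : HasDerivAt D D' ξ) (hD0 : D ξ ≠ 0) :
    deriv (deriv Φ) ξ = Φ ξ * (1 + D') / D ξ ^ 2 := by
  have hderiv : deriv Φ =ᶠ[𝓝 ξ] fun x => -Φ x / D x :=
    eventually_of_mem (hU.mem_nhds hξ) fun x hx => (hΦ x hx).deriv
  rw [hderiv.deriv_eq, ((hΦ ξ hξ).fun_neg.fun_div hD hD0).deriv]
  field_simp
  ring

theorem Filter.EventuallyEq.deriv_atTop {f g : ℝ → ℝ} (h : f =ᶠ[atTop] g) :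
    deriv f =ᶠ[atTop] deriv g := by
  obtain ⟨M, hM⟩ := eventually_atTop.mp h
  filter_upwards [eventually_gt_atTop M] with s hs
  exact EventuallyEq.deriv_eq (eventually_of_mem (Ioi_mem_nhds hs) fun t ht => hM t ht.le)

theorem eventually_mul_deriv_le_of_tendsto {ρ : ℝ → ℝ} (hρtop : Tendsto ρ atTop atTop)
    (hρratio : Tendsto (fun s => s * deriv ρ s / ρ s) atTop (𝓝 0)) :
    ∀ᶠ s in atTop, s * deriv ρ s ≤ ρ s := by
  filter_upwards [hρratio.eventually (gt_mem_nhds one_pos), hρtop.eventually_gt_atTop 0]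
    with s hratio hpos
  exact ((div_lt_one hpos).mp hratio).le

theorem eventually_one_add_add_mul_deriv_le {f ρ : ℝ → ℝ} (hρtop : Tendsto ρ atTop atTop)
    (hρratio : Tendsto (fun s => s * deriv ρ s / ρ s) atTop (𝓝 0)) (hfρ : f =ᶠ[atTop] ρ) :
    ∀ᶠ s in atTop, 1 + f s + s * deriv f s ≤ 3 * f s := by
  filter_upwards [hfρ, hfρ.deriv_atTop, eventually_mul_deriv_le_of_tendsto hρtop hρratio,
    hρtop.eventually_ge_atTop 1] with s hs hs' hle hge
  rw [hs, hs']
  linarith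

theorem exists_pos_forall_Ici_le_mul {g h : ℝ → ℝ} {b K : ℝ}
    (hg : ContinuousOn g (Ici b)) (hh : ContinuousOn h (Ici b)) (hpos : ∀ s ∈ Ici b, 0 < h s)
    (htail : ∀ᶠ s in atTop, g s ≤ K * h s) :
    ∃ C > 0, ∀ s ∈ Ici b, g s ≤ C * h s := by
  obtain ⟨M, hM⟩ := eventually_atTop.mp htail
  have hratio : ContinuousOn (fun s => g s / h s) (Icc b M) :=
    (hg.div hh fun s hs => (hpos s hs).ne').mono Icc_subset_Ici_self
  obtain ⟨B, hB⟩ := isCompact_Icc.bddAbove_image hratio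
  refine ⟨max (max K B) 1, by positivity, fun s hs => ?_⟩
  rcases le_total s M with hsM | hMs
  · have hgB : g s / h s ≤ B := hB ⟨s, ⟨hs, hsM⟩, rfl⟩
    calc g s ≤ B * h s := (div_le_iff₀ (hpos s hs)).mp hgB
      _ ≤ max (max K B) 1 * h s := by
        gcongr
        · exact (hpos s hs).le
        · exact (le_max_right K B).trans (le_max_left _ _)
  · calc g s ≤ K * h s := hM s hMs
      _ ≤ max (max K B) 1 * h s := by
        gcongr
        · exact (hpos s hs).le
        · exact (le_max_left K B).trans (le_max_left _ _)

theorem stmt8_general (ρ f : ℝ → ℝ)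
    (hρtop : Filter.Tendsto ρ Filter.atTop Filter.atTop)
    (hρratio : Filter.Tendsto (fun s => s * deriv ρ s / ρ s) Filter.atTop (nhds 0))
    (hf : ContDiff ℝ 1 f)
    (hfpos : ∀ s ∈ Set.Ici (0:ℝ), 0 < f s)
    (hfρ : ∀ s ∈ Set.Ici (1:ℝ), f s = ρ s)
    (ψ Φ : ℝ → ℝ)
    (hψ : ∀ ξ, ψ ξ = ∫ s in (0:ℝ)..ξ, 1 / (s * f s + 1))
    (hΦ : ∀ ξ, Φ ξ = Real.exp (-ψ ξ)) :
    (∀ ξ, 0 ≤ ξ → HasDerivAt Φ (-Φ ξ / (ξ * f ξ + 1)) ξ ∧ -Φ ξ / (ξ * f ξ + 1) ≤ 0) ∧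
    ∃ C > (0:ℝ), ∀ ξ, 0 ≤ ξ →
      deriv (deriv Φ) ξ ≤ C * Φ ξ * f ξ / (ξ * f ξ + 1) ^ 2 := by
  have hfc : Continuous f := hf.continuous
  have hf' : Continuous (deriv f) := hf.continuous_deriv le_rfl
  have hD_ge : ∀ s ∈ Ici (0:ℝ), 1 ≤ s * f s + 1 := fun s hs =>
    le_add_of_nonneg_left (mul_nonneg hs (hfpos s hs).le)
  have hD_cont : Continuous fun s => s * f s + 1 := by fun_prop
  obtain ⟨a, ha, hD_pos⟩ : ∃ a < 0, ∀ s ∈ Ioi a, 0 < s * f s + 1 :=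
    hD_cont.continuousAt.exists_lt_forall_pos_of_forall_Ici fun s hs =>
      zero_lt_one.trans_le (hD_ge s hs)
  have hΦ' : ∀ ξ ∈ Ioi a, HasDerivAt Φ (-Φ ξ / (ξ * f ξ + 1)) ξ := fun ξ hξ => by
    rw [show Φ = fun t => exp (-∫ s in 0..t, 1 / (s * f s + 1)) by ext; rw [hΦ, hψ]]
    exact hasDerivAt_exp_neg_integral_one_div hD_cont.continuousOn
      (fun s hs => (hD_pos s hs).ne') ha hξ
  have hΦ_pos : ∀ ξ, 0 < Φ ξ := fun ξ => hΦ ξ ▸ exp_pos _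
  refine ⟨fun ξ hξ => ⟨hΦ' ξ (ha.trans_le hξ), ?_⟩, ?_⟩
  · exact div_nonpos_of_nonpos_of_nonneg (neg_nonpos.mpr (hΦ_pos ξ).le)
      (zero_le_one.trans (hD_ge ξ hξ))
  obtain ⟨C, hC, hbound⟩ := exists_pos_forall_Ici_le_mul (by fun_prop) hfc.continuousOn hfpos
    (eventually_one_add_add_mul_deriv_le hρtop hρratio (eventually_atTop.mpr ⟨1, hfρ⟩))
  refine ⟨C, hC, fun ξ hξ => ?_⟩
  have hD : HasDerivAt (fun s => s * f s + 1) (f ξ + ξ * deriv f ξ) ξ := by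
    simpa using ((hasDerivAt_id ξ).mul (hf.differentiable one_ne_zero ξ).hasDerivAt).add_const 1
  rw [deriv_deriv_eq_of_hasDerivAt_neg_div isOpen_Ioi hΦ' (ha.trans_le hξ) hD
    (hD_pos ξ (ha.trans_le hξ)).ne', ← add_assoc]
  gcongr ?_ / _
  calc Φ ξ * (1 + f ξ + ξ * deriv f ξ) ≤ Φ ξ * (C * f ξ) :=
      mul_le_mul_of_nonneg_left (hbound ξ hξ) (hΦ_pos ξ).le
    _ = C * Φ ξ * f ξ := by ring

theorem stmt8 (ρ f : ℝ → ℝ)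
    (hρ : ContDiffOn ℝ 1 ρ (Set.Ici 1))
    (hρpos : ∀ s ∈ Set.Ici (1:ℝ), 0 < ρ s)
    (hρtop : Filter.Tendsto ρ Filter.atTop Filter.atTop)
    (hρratio : Filter.Tendsto (fun s => s * deriv ρ s / ρ s) Filter.atTop (nhds 0))
    (hf : ContDiff ℝ 1 f)
    (hfpos : ∀ s ∈ Set.Ici (0:ℝ), 0 < f s)
    (hfρ : ∀ s ∈ Set.Ici (1:ℝ), f s = ρ s)
    (ψ Φ : ℝ → ℝ)
    (hψ : ∀ ξ, ψ ξ = ∫ s in (0:ℝ)..ξ, 1 / (s * f s + 1))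
    (hΦ : ∀ ξ, Φ ξ = Real.exp (-ψ ξ)) :
    (∀ ξ, 0 ≤ ξ → HasDerivAt Φ (-Φ ξ / (ξ * f ξ + 1)) ξ ∧ -Φ ξ / (ξ * f ξ + 1) ≤ 0) ∧
    ∃ C > (0:ℝ), ∀ ξ, 0 ≤ ξ →
      deriv (deriv Φ) ξ ≤ C * Φ ξ * f ξ / (ξ * f ξ + 1) ^ 2 :=
  stmt8_general ρ f hρtop hρratio hf hfpos hfρ ψ Φ hψ hΦ
end
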